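/- In the ring of Laurent polynomials \mathbb{Z}[x, x^{-1}], for every natural number n one has (x + x^{-1})^n \cdot (x - x^{-1}) = \sum_l C(n, (n+1-l)/2) \cdot (x^l - x^{-l}), where l runs over the integers with 1 \le l \le n+1 and l \equiv n+1 \pmod 2. -/

import Mathlib

/-- `binZ n j` is the binomial coefficient `n choose j` for `j : ℤ`, which is `0`
unless `0 ≤ j ≤ n`. -/
def binZ (n : ℕ) (j : ℤ) : ℤ := if 0 ≤ j then (n.choose j.toNat : ℤ) else 0

/-- `catC n j = C(n,j) = binom(n,j) - binom(n,j-1)`. -/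
def catC (n : ℕ) (j : ℤ) : ℤ := binZ n j - binZ n (j - 1)

/-!
Multiplication by `x + x⁻¹` acts on coefficient sequences by Pascal's rule, which `C(n, ·)` obeys,
so `(x + x⁻¹)^n (x - x⁻¹) = ∑_{k=0}^{n+1} C(n, k) x^(n+1-2k)`. Since `C(n, n+1-k) = -C(n, k)`, the
terms `k` and `n+1-k` combine to `C(n, k) (x^l - x^(-l))` with `l = n+1-2k`, and for odd `n` the
unpaired middle term `k = (n+1)/2` vanishes.
-/

open Finset LaurentPolynomial

lemma binZ_of_neg (n : ℕ) {j : ℤ} (h : j < 0) : binZ n j = 0 :=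
  if_neg (by omega)

lemma binZ_of_lt (n : ℕ) {j : ℤ} (h : (n : ℤ) < j) : binZ n j = 0 := by
  rw [binZ, if_pos (by omega), Nat.choose_eq_zero_of_lt (by omega), Nat.cast_zero]

lemma binZ_symm (n : ℕ) (j : ℤ) : binZ n (n - j) = binZ n j := by
  rcases lt_or_ge j 0 with h | h
  · rw [binZ_of_lt n (by omega), binZ_of_neg n h]
  rcases le_or_gt j n with h' | h'
  · rw [binZ, binZ, if_pos (by omega), if_pos h, show (n - j).toNat = n - j.toNat by omega,
      Nat.choose_symm (by omega)]
  · rw [binZ_of_neg n (by omega), binZ_of_lt n h']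

lemma binZ_succ (n : ℕ) (j : ℤ) : binZ (n + 1) j = binZ n j + binZ n (j - 1) := by
  rcases lt_trichotomy j 0 with h | rfl | h
  · rw [binZ_of_neg _ h, binZ_of_neg _ h, binZ_of_neg _ (by omega), add_zero]
  · simp [binZ]
  · obtain ⟨k, rfl⟩ : ∃ k : ℕ, j = k + 1 := ⟨(j - 1).toNat, by omega⟩
    simp only [binZ, add_sub_cancel_right, if_pos (by omega : (0 : ℤ) ≤ k + 1),
      if_pos (by omega : (0 : ℤ) ≤ k), show ((k : ℤ) + 1).toNat = k + 1 by omega, Int.toNat_natCast,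
      Nat.choose_succ_succ, Nat.cast_add]
    ring

lemma catC_succ (n : ℕ) (j : ℤ) : catC (n + 1) j = catC n j + catC n (j - 1) := by
  simp only [catC, binZ_succ]
  ring

lemma catC_of_neg (n : ℕ) {j : ℤ} (h : j < 0) : catC n j = 0 := by
  rw [catC, binZ_of_neg n h, binZ_of_neg n (by omega), sub_zero]

lemma catC_of_lt (n : ℕ) {j : ℤ} (h : (n : ℤ) + 1 < j) : catC n j = 0 := by
  rw [catC, binZ_of_lt n (by omega), binZ_of_lt n (by omega), sub_zero]

lemma catC_antisymm (n : ℕ) (j : ℤ) : catC n (n + 1 - j) = -catC n j := by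
  rw [catC, catC, show (n : ℤ) + 1 - j = n - (j - 1) by ring,
    show (n : ℤ) - (j - 1) - 1 = n - j by ring, binZ_symm, binZ_symm, neg_sub]

lemma catC_of_two_mul_eq (n : ℕ) {j : ℤ} (h : 2 * j = n + 1) : catC n j = 0 := by
  have := catC_antisymm n j
  rw [show (n : ℤ) + 1 - j = j by omega] at this
  omega

lemma T_add_T_neg_pow_mul_sub {R : Type*} [CommRing R] (n : ℕ) :
    (T 1 + T (-1) : R[T;T⁻¹]) ^ n * (T 1 - T (-1)) =
      ∑ k ∈ range (n + 2), catC n k • T (n + 1 - 2 * k) := by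
  induction n with
  | zero => simp [sum_range_succ, catC, binZ, sub_eq_add_neg]
  | succ n ih =>
    have hT (m : ℤ) : (T 1 + T (-1) : R[T;T⁻¹]) * T m = T (m + 1) + T (m - 1) := by
      rw [add_mul, ← T_add, ← T_add, add_comm (1 : ℤ), add_comm (-1 : ℤ), sub_eq_add_neg]
    calc (T 1 + T (-1) : R[T;T⁻¹]) ^ (n + 1) * (T 1 - T (-1))
        = (T 1 + T (-1)) * ((T 1 + T (-1)) ^ n * (T 1 - T (-1))) := by ring
      _ = ∑ k ∈ range (n + 2), catC n k • T (n + 2 - 2 * k) +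
            ∑ k ∈ range (n + 2), catC n k • T (n - 2 * k) := by
        rw [ih, mul_sum, ← sum_add_distrib]
        refine sum_congr rfl fun k _ => ?_
        rw [mul_smul_comm, hT, smul_add]
        ring_nf
      _ = ∑ k ∈ range (n + 3), catC n k • T (n + 2 - 2 * k) +
            ∑ k ∈ range (n + 3), catC n (k - 1) • T (n + 2 - 2 * k) := by
        rw [sum_range_succ _ (n + 2), sum_range_succ' _ (n + 2),
          catC_of_lt n (by push_cast; omega), catC_of_neg n (by omega)]
        simp only [zero_smul, add_zero]
        congr 1
        refine sum_congr rfl fun k _ => ?_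
        push_cast
        ring_nf
      _ = ∑ k ∈ range (n + 1 + 2), catC (n + 1) k • T ((n + 1 : ℕ) + 1 - 2 * k) := by
        rw [← sum_add_distrib]
        refine sum_congr rfl fun k _ => ?_
        rw [catC_succ, add_smul]
        push_cast
        ring_nf

lemma sum_range_succ_eq_sum_add_reflect {M : Type*} [AddCommMonoid M] (N : ℕ) (g : ℕ → M)
    (hmid : 2 * (N / 2) = N → g (N / 2) = 0) :
    ∑ k ∈ range (N + 1), g k = ∑ k ∈ range ((N + 1) / 2), (g k + g (N - k)) := by
  induction N using Nat.twoStepInduction generalizing g with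
  | zero => simpa using hmid rfl
  | one => simp [sum_range_succ]
  | more N ih =>
    have hmid' : 2 * (N / 2) = N → g (N / 2 + 1) = 0 := fun h => by
      simpa [show (N + 2) / 2 = N / 2 + 1 by omega] using hmid (by omega)
    rw [sum_range_succ, sum_range_succ', ih (fun k => g (k + 1)) hmid',
      show (N + 2 + 1) / 2 = (N + 1) / 2 + 1 by omega, sum_range_succ']
    have hreflect : ∀ k ∈ range ((N + 1) / 2), N - k + 1 = N + 2 - (k + 1) := by
      intro k hk
      rw [mem_range] at hk
      omega
    rw [sum_congr rfl fun k hk => by rw [hreflect k hk]]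
    simp only [Nat.sub_zero]
    abel

lemma sum_filter_Icc_mod_two_eq_sum_range {M : Type*} [AddCommMonoid M] (n : ℕ) (φ : ℤ → M) :
    ∑ l ∈ (Icc 1 (n + 1)).filter (fun l => l % 2 = (n + 1) % 2), φ l =
      ∑ k ∈ range (n / 2 + 1), φ (n + 1 - 2 * k) := by
  symm
  apply sum_nbij' (fun k => n + 1 - 2 * k) (fun l => (n + 1 - l) / 2)
  all_goals
    intro a ha
    simp only [mem_filter, mem_Icc, mem_range] at ha ⊢
  any_goals omega
  rw [Nat.cast_sub (by omega)]
  push_cast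
  rfl

open LaurentPolynomial in
/-- In `ℤ[x,x⁻¹]`, `(x + x⁻¹)^n (x - x⁻¹) = ∑_l C(n,(n+1-l)/2) (x^l - x^{-l})`, the sum
over integers `1 ≤ l ≤ n+1` with `l ≡ n+1 (mod 2)`. -/
theorem laurent_catalan_expansion (n : ℕ) :
    ((T 1 + T (-1) : LaurentPolynomial ℤ)) ^ n * (T 1 - T (-1)) =
      ∑ l ∈ Finset.Icc 1 (n + 1),
        if l % 2 = (n + 1) % 2 then
          catC n (((n : ℤ) + 1 - l) / 2) • ((T (l : ℤ) - T (-(l : ℤ))) : LaurentPolynomial ℤ)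
        else 0 := by
  rw [T_add_T_neg_pow_mul_sub, sum_range_succ_eq_sum_add_reflect, ← sum_filter,
    sum_filter_Icc_mod_two_eq_sum_range n fun l => catC n ((n + 1 - l) / 2) • (T l - T (-l)),
    show (n + 1 + 1) / 2 = n / 2 + 1 by omega]
  · refine sum_congr rfl fun k hk => ?_
    have hk : 2 * k ≤ n := by rw [mem_range] at hk; omega
    rw [Nat.cast_sub (by omega), show ((n : ℤ) + 1 - (n + 1 - 2 * k)) / 2 = k by omega,
      show ((n + 1 : ℕ) : ℤ) - k = n + 1 - k by push_cast; ring, catC_antisymm, smul_sub, neg_smul,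
      sub_eq_add_neg]
    ring_nf
  · intro h
    rw [catC_of_two_mul_eq n (by omega), zero_smul]
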